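/- For every integer n, the Abramowitz function J_n, i.e. the function z ↦ ∫_0^∞ t^n · exp(−t² − z/t) dt, is analytic (holomorphic) on the open right half-plane {z ∈ ℂ : Re(z) > 0}. -/

import Mathlib

open MeasureTheory

/-- The Abramowitz function `J_n`. -/
noncomputable def abramowitzJ (n : ℤ) (z : ℂ) : ℂ :=
  ∫ t in Set.Ioi (0 : ℝ), ((t ^ n : ℝ) : ℂ) * Complex.exp (-(t : ℂ) ^ 2 - z / (t : ℂ))

/-!
For `Re z ≥ c > 0` the integrand of `J_n(z)` is dominated by `t ^ n * exp (-t ^ 2 - c / t)`,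
which is integrable on `(0, ∞)`: near `0` the factor `exp (-c / t) ≤ k! (t / c) ^ k` absorbs any
negative power of `t`, and near `∞` the Gaussian factor wins. Since `∂_z` of the integrand of
`J_n` is minus the integrand of `J_{n-1}`, dominated differentiation under the integral sign gives
`J_n' = -J_{n-1}` on the right half-plane, and a complex differentiable function on an open set is
analytic there.
-/

open Real Set

lemma Real.pow_mul_exp_neg_le_factorial {x : ℝ} (hx : 0 ≤ x) (k : ℕ) :
    x ^ k * exp (-x) ≤ k.factorial := by
  rw [exp_neg, ← div_eq_mul_inv, div_le_iff₀ (exp_pos x), mul_comm]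
  exact (div_le_iff₀ (by positivity)).1 (pow_div_factorial_le_exp x hx k)

lemma integrableOn_zpow_mul_exp_neg_sq_sub_div (m : ℤ) {c : ℝ} (hc : 0 < c) :
    IntegrableOn (fun t : ℝ => t ^ m * exp (-t ^ 2 - c / t)) (Ioi 0) := by
  set k : ℕ := (-m).toNat
  have hdom : IntegrableOn (fun t : ℝ => k.factorial / c ^ k *
      (t ^ ((m + k : ℤ) : ℝ) * exp (-1 * t ^ 2))) (Ioi 0) :=
    (integrableOn_rpow_mul_exp_neg_mul_sq one_pos
      (by exact_mod_cast (show (-1 : ℤ) < m + k by omega))).const_mul _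
  refine hdom.mono' (by fun_prop) ?_
  filter_upwards [ae_restrict_mem measurableSet_Ioi] with t (ht : 0 < t)
  have hexp : exp (-(c / t)) ≤ k.factorial / c ^ k * t ^ k := by
    have h := pow_mul_exp_neg_le_factorial (div_pos hc ht).le k
    rw [div_pow] at h
    rw [div_mul_eq_mul_div, le_div_iff₀ (by positivity)]
    calc exp (-(c / t)) * c ^ k = c ^ k / t ^ k * exp (-(c / t)) * t ^ k := by
          field_simp
      _ ≤ k.factorial * t ^ k := by gcongr
  rw [norm_of_nonneg (by positivity), rpow_intCast, zpow_add₀ ht.ne', zpow_natCast]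
  calc t ^ m * exp (-t ^ 2 - c / t) = t ^ m * exp (-1 * t ^ 2) * exp (-(c / t)) := by
        rw [mul_assoc, ← exp_add]; ring_nf
    _ ≤ t ^ m * exp (-1 * t ^ 2) * (k.factorial / c ^ k * t ^ k) := by gcongr
    _ = k.factorial / c ^ k * (t ^ m * t ^ k * exp (-1 * t ^ 2)) := by ring

noncomputable def abramowitzIntegrand (n : ℤ) (z : ℂ) (t : ℝ) : ℂ :=
  ((t ^ n : ℝ) : ℂ) * Complex.exp (-(t : ℂ) ^ 2 - z / (t : ℂ))

lemma norm_abramowitzIntegrand_le (n : ℤ) {z : ℂ} {c t : ℝ} (ht : 0 < t) (hc : c ≤ z.re) :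
    ‖abramowitzIntegrand n z t‖ ≤ t ^ n * exp (-t ^ 2 - c / t) := by
  have hre : (-(t : ℂ) ^ 2 - z / (t : ℂ)).re = -t ^ 2 - z.re / t := by
    simp [Complex.div_ofReal_re, ← Complex.ofReal_pow]
  rw [abramowitzIntegrand, norm_mul, Complex.norm_exp, hre, Complex.norm_real,
    norm_of_nonneg (zpow_pos ht n).le]
  gcongr

lemma aestronglyMeasurable_abramowitzIntegrand (n : ℤ) (z : ℂ) :
    AEStronglyMeasurable (abramowitzIntegrand n z) (volume.restrict (Ioi 0)) := by
  unfold abramowitzIntegrand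
  fun_prop

lemma integrableOn_abramowitzIntegrand (n : ℤ) {z : ℂ} (hz : 0 < z.re) :
    IntegrableOn (abramowitzIntegrand n z) (Ioi 0) :=
  (integrableOn_zpow_mul_exp_neg_sq_sub_div n hz).mono'
    (aestronglyMeasurable_abramowitzIntegrand n z) <| by
    filter_upwards [ae_restrict_mem measurableSet_Ioi] with t ht
    exact norm_abramowitzIntegrand_le n ht le_rfl

lemma hasDerivAt_abramowitzIntegrand (n : ℤ) (z : ℂ) {t : ℝ} (ht : 0 < t) :
    HasDerivAt (abramowitzIntegrand n · t) (-abramowitzIntegrand (n - 1) z t) z := by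
  have hexp : HasDerivAt (fun z : ℂ => -(t : ℂ) ^ 2 - z / (t : ℂ)) (-(t : ℂ)⁻¹) z := by
    simpa using ((hasDerivAt_id z).div_const (t : ℂ)).const_sub (-(t : ℂ) ^ 2)
  refine (hexp.cexp.const_mul ((t ^ n : ℝ) : ℂ)).congr_deriv ?_
  rw [abramowitzIntegrand, zpow_sub_one₀ ht.ne']
  push_cast
  ring

lemma hasDerivAt_abramowitzJ (n : ℤ) {z₀ : ℂ} (hz₀ : 0 < z₀.re) :
    HasDerivAt (abramowitzJ n) (-abramowitzJ (n - 1) z₀) z₀ := by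
  set c := z₀.re / 2 with hc_def
  have hc : 0 < c := by positivity
  have hball : ∀ z ∈ Metric.ball z₀ c, c ≤ z.re := fun z hz => by
    have := (abs_lt.mp ((Complex.abs_re_le_norm (z - z₀)).trans_lt (mem_ball_iff_norm.mp hz))).1
    rw [Complex.sub_re] at this
    linarith [hc_def]
  have hbound : ∀ᵐ t ∂volume.restrict (Ioi 0), ∀ z ∈ Metric.ball z₀ c,
      ‖-abramowitzIntegrand (n - 1) z t‖ ≤ t ^ (n - 1) * exp (-t ^ 2 - c / t) := by
    filter_upwards [ae_restrict_mem measurableSet_Ioi] with t ht z hz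
    rw [norm_neg]
    exact norm_abramowitzIntegrand_le (n - 1) ht (hball z hz)
  have hderiv : ∀ᵐ t ∂volume.restrict (Ioi 0), ∀ z ∈ Metric.ball z₀ c,
      HasDerivAt (abramowitzIntegrand n · t) (-abramowitzIntegrand (n - 1) z t) z := by
    filter_upwards [ae_restrict_mem measurableSet_Ioi] with t ht z _
    exact hasDerivAt_abramowitzIntegrand n z ht
  have key := hasDerivAt_integral_of_dominated_loc_of_deriv_le (Metric.ball_mem_nhds z₀ hc)
    (.of_forall (aestronglyMeasurable_abramowitzIntegrand n))
    (integrableOn_abramowitzIntegrand n hz₀)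
    (aestronglyMeasurable_abramowitzIntegrand (n - 1) z₀).neg hbound
    (integrableOn_zpow_mul_exp_neg_sq_sub_div (n - 1) hc) hderiv
  rw [integral_neg] at key
  exact key.2

theorem abramowitzJ_analyticOnNhd (n : ℤ) :
    AnalyticOnNhd ℂ (abramowitzJ n) {z : ℂ | 0 < z.re} :=
  DifferentiableOn.analyticOnNhd
    (fun _ hz => (hasDerivAt_abramowitzJ n hz).differentiableAt.differentiableWithinAt)
    (isOpen_lt continuous_const Complex.continuous_re)
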